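/- arXiv:1808.08636 — 4 statements merged into one kernel-verified Lean document; each statement's English description precedes it below -/
import Mathlib

section
/- For every positive integer N and every real t with 0 < t < π and t ≠ 2π/(N+2), Σ_{k=1}^{N+1} sin²(kπ/(N+2)) · e^{ikt} = sin²(π/(N+2)) · (sin((N+2)t/2)/(cos t − cos(2π/(N+2)))) · (sin t/(1 − cos t)) · e^{i(N+2)t/2}. -/
/-!
With `z = e^{it}` and `w = e^{2πi/(N+2)}` one has `sin²(kπ/(N+2)) = -(w^k - 2 + w^{-k})/4`, so the
sum is a combination of the geometric sums of `z`, `zw` and `z/w` over `0 ≤ k < N+2`. Since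
`w^{N+2} = 1` they all have numerator `z^{N+2} - 1 = (e^{i(N+2)t/2})²`, and combining the three
denominators gives a rational function of `z` and `w` which is exactly the right-hand side once its
trigonometric factors are written through `z` and `w`. The hypotheses on `t` say that none of
`z`, `zw`, `z/w` equals `1`.
-/

open Finset Complex
open scoped Real

namespace Complex

theorem sin_eq_exp_mul_I (z : ℂ) : sin z = (exp (z * I) - (exp (z * I))⁻¹) / (2 * I) := by
  rw [sin, neg_mul, exp_neg]
  field_simp
  rw [I_sq]
  ring

theorem cos_eq_exp_mul_I (z : ℂ) : cos z = (exp (z * I) + (exp (z * I))⁻¹) / 2 := by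
  rw [cos, neg_mul, exp_neg]

theorem ofReal_sin_sq_eq_exp_mul_I (x : ℝ) :
    ((Real.sin x ^ 2 : ℝ) : ℂ) = -(exp ((2 * x : ℝ) * I) - 2 + (exp ((2 * x : ℝ) * I))⁻¹) / 4 := by
  have h : exp ((2 * x : ℝ) * I) = exp (x * I) ^ 2 := by
    rw [← exp_nat_mul]; push_cast; ring_nf
  rw [ofReal_pow, ofReal_sin, sin_eq_exp_mul_I, h]
  field_simp
  rw [I_sq]
  ring

theorem ofReal_sin_div_cos_sub_cos_eq_exp_mul_I (s x y : ℝ) :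
    ((Real.sin s / (Real.cos x - Real.cos y) : ℝ) : ℂ) =
      (exp (s * I) - (exp (s * I))⁻¹) / (2 * I) * (2 * exp (x * I) * exp (y * I)) /
        ((exp (x * I) - exp (y * I)) * (exp (x * I) * exp (y * I) - 1)) := by
  have hden : (exp (x * I) + (exp (x * I))⁻¹) / 2 - (exp (y * I) + (exp (y * I))⁻¹) / 2 =
      (exp (x * I) - exp (y * I)) * (exp (x * I) * exp (y * I) - 1) /
        (2 * exp (x * I) * exp (y * I)) := by
    field_simp
    ring
  push_cast
  rw [sin_eq_exp_mul_I, cos_eq_exp_mul_I, cos_eq_exp_mul_I, hden, div_div_eq_mul_div]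

theorem ofReal_sin_div_one_sub_cos_eq_exp_mul_I (x : ℝ) :
    ((Real.sin x / (1 - Real.cos x) : ℝ) : ℂ) = I * (exp (x * I) + 1) / (exp (x * I) - 1) := by
  set e := exp (x * I)
  have he : e ≠ 0 := exp_ne_zero _
  have hden : 1 - (e + e⁻¹) / 2 = -(e - 1) ^ 2 / (2 * e) := by field_simp; ring
  push_cast
  rw [sin_eq_exp_mul_I, cos_eq_exp_mul_I, hden]
  by_cases h : e = 1
  · -- both sides are divisions by zero
    simp [h]
  have h' : e - 1 ≠ 0 := sub_ne_zero.2 h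
  field_simp
  rw [I_sq]
  ring

theorem exp_ofReal_mul_I_ne {x y : ℝ} (hxy : x ≠ y) (h₁ : -(2 * π) < x - y) (h₂ : x - y < 2 * π) :
    exp (x * I) ≠ exp (y * I) := by
  intro h
  rw [exp_eq_exp_iff_exp_sub_eq_one, ← sub_mul, ← ofReal_sub] at h
  have hcos := congrArg re h
  rw [exp_ofReal_mul_I_re, one_re, Real.cos_eq_one_iff_of_lt_of_lt h₁ h₂] at hcos
  exact hxy (sub_eq_zero.1 hcos)

end Complex

theorem sum_range_pow_sub_two_add_inv_pow_mul_pow {K : Type*} [Field K] {w z : K} {M : ℕ}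
    (hw : w ^ M = 1) (hz : z ≠ 1) (hzw : z * w ≠ 1) (hzw' : z ≠ w) :
    ∑ k ∈ range M, (w ^ k - 2 + w⁻¹ ^ k) * z ^ k =
      (z ^ M - 1) * z * (z + 1) * (w - 1) ^ 2 / ((z - 1) * (z * w - 1) * (z - w)) := by
  rcases M.eq_zero_or_pos with rfl | hM
  · simp
  have hw0 : w ≠ 0 := by rintro rfl; simp [zero_pow hM.ne'] at hw
  have hzw'' : z * w⁻¹ ≠ 1 := fun h => hzw' (by field_simp at h; exact h)
  simp_rw [add_mul, sub_mul, ← mul_pow, mul_comm w z, mul_comm w⁻¹ z]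
  rw [sum_add_distrib, sum_sub_distrib, ← mul_sum, geom_sum_eq hzw, geom_sum_eq hz,
    geom_sum_eq hzw'', mul_pow, mul_pow, inv_pow, hw, inv_one, mul_one]
  field_simp [sub_ne_zero.2 hz, sub_ne_zero.2 hzw, sub_ne_zero.2 hzw']
  ring

theorem sum_Icc_sin_sq_mul_exp (n : ℕ) (θ t : ℝ) :
    ∑ k ∈ Icc 1 n, ((Real.sin (k * θ) ^ 2 : ℝ) : ℂ) * exp (I * (k * t)) =
      -(1 / 4) * ∑ k ∈ range (n + 1),
        (exp ((2 * θ : ℝ) * I) ^ k - 2 + (exp ((2 * θ : ℝ) * I))⁻¹ ^ k) * exp (t * I) ^ k := by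
  have hterm (k : ℕ) : ((Real.sin (k * θ) ^ 2 : ℝ) : ℂ) * exp (I * (k * t)) =
      -(1 / 4) * ((exp ((2 * θ : ℝ) * I) ^ k - 2 + (exp ((2 * θ : ℝ) * I))⁻¹ ^ k) *
        exp (t * I) ^ k) := by
    simp only [ofReal_sin_sq_eq_exp_mul_I, ← exp_nat_mul, ← exp_neg]
    push_cast
    ring_nf
  have hIcc : Icc 1 n = (range (n + 1)).erase 0 := by ext k; simp; omega
  rw [hIcc, sum_congr rfl fun k _ => hterm k, sum_erase _ (by norm_num), mul_sum]

theorem stmt4_general (N : ℕ) (t : ℝ) (ht0 : 0 < t) (htπ : t < Real.pi)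
    (ht : t ≠ 2 * Real.pi / (N + 2)) :
    ∑ k ∈ Finset.Icc 1 (N + 1),
        (Real.sin (k * Real.pi / (N + 2)) ^ 2 : ℝ) * Complex.exp (Complex.I * (k * t)) =
      (Real.sin (Real.pi / (N + 2)) ^ 2 : ℝ) *
        ((Real.sin ((N + 2) * t / 2) /
          (Real.cos t - Real.cos (2 * Real.pi / (N + 2)))) : ℝ) *
        ((Real.sin t / (1 - Real.cos t)) : ℝ) *
        Complex.exp (Complex.I * ((N + 2) * t / 2)) := by
  have hI : I * ((N + 2) * t / 2) = ((N + 2) * t / 2 : ℝ) * I := by push_cast; ring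
  simp_rw [mul_div_assoc _ π] at ht ⊢
  rw [sum_Icc_sin_sq_mul_exp, ofReal_sin_sq_eq_exp_mul_I, ofReal_sin_div_cos_sub_cos_eq_exp_mul_I,
    ofReal_sin_div_one_sub_cos_eq_exp_mul_I, hI]
  set a := 2 * (π / (N + 2)) with ha
  set z := exp (t * I)
  set w := exp (a * I)
  set v := exp (((N + 2) * t / 2 : ℝ) * I)
  have ha0 : 0 < a := by positivity
  have haπ : a ≤ π := by
    rw [ha, mul_div_assoc', div_le_iff₀ (by positivity)]
    nlinarith [Real.pi_pos, (N.cast_nonneg : (0 : ℝ) ≤ N)]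
  have hw : w ^ (N + 2) = 1 := by
    convert (isPrimitiveRoot_exp (N + 2) (by omega)).pow_eq_one using 3
    push_cast [ha]
    ring
  have hzv : z ^ (N + 2) = v ^ 2 := by
    rw [← exp_nat_mul, ← exp_nat_mul]; congr 1; push_cast; ring
  have hz1 : z ≠ 1 := by
    simpa using exp_ofReal_mul_I_ne ht0.ne' (by linarith) (by linarith)
  have hzw : z * w ≠ 1 := by
    rw [← exp_add, ← add_mul, ← ofReal_add]
    simpa using exp_ofReal_mul_I_ne (by linarith : t + a ≠ 0) (by linarith) (by linarith)
  have hzw' : z ≠ w := exp_ofReal_mul_I_ne ht (by linarith) (by linarith)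
  rw [sum_range_pow_sub_two_add_inv_pow_mul_pow hw hz1 hzw hzw', hzv]
  have hz0 : z ≠ 0 := exp_ne_zero _
  have hw0 : w ≠ 0 := exp_ne_zero _
  have hv0 : v ≠ 0 := exp_ne_zero _
  field_simp [sub_ne_zero.2 hz1, sub_ne_zero.2 hzw, sub_ne_zero.2 hzw']
  ring

theorem stmt4 (N : ℕ) (hN : 0 < N) (t : ℝ) (ht0 : 0 < t) (htπ : t < Real.pi)
    (ht : t ≠ 2 * Real.pi / (N + 2)) :
    ∑ k ∈ Finset.Icc 1 (N + 1),
        (Real.sin (k * Real.pi / (N + 2)) ^ 2 : ℝ) * Complex.exp (Complex.I * (k * t)) =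
      (Real.sin (Real.pi / (N + 2)) ^ 2 : ℝ) *
        ((Real.sin ((N + 2) * t / 2) /
          (Real.cos t - Real.cos (2 * Real.pi / (N + 2)))) : ℝ) *
        ((Real.sin t / (1 - Real.cos t)) : ℝ) *
        Complex.exp (Complex.I * ((N + 2) * t / 2)) :=
  stmt4_general N t ht0 htπ ht
end

section
/- For every positive integer N, the absolute value of P_N evaluated at −1 satisfies |P_N(−1)| = (1/4)·sec²(π/(N+2)). -/
/-- Evaluation of the `k`-th Chebyshev polynomial of the second kind at `x`. -/
noncomputable def Ueval (k : ℤ) (x : ℝ) : ℝ := (Polynomial.Chebyshev.U ℝ k).eval x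

/-- Evaluation of the derivative of the `k`-th Chebyshev polynomial of the second kind at `x`. -/
noncomputable def U'eval (k : ℤ) (x : ℝ) : ℝ :=
  (Polynomial.derivative (Polynomial.Chebyshev.U ℝ k)).eval x

/-- The polynomial `P_N(z) = (1/U'_N(cos(π/(N+2)))) · Σ_{k=1}^N U'_{N−k+1}(cos(π/(N+2))) ·
U_{k−1}(cos(π/(N+2))) · z^k`. -/
noncomputable def P (N : ℕ) (z : ℂ) : ℂ :=
  (1 / U'eval N (Real.cos (Real.pi / (N + 2))) : ℝ) *
    ∑ k ∈ Finset.Icc 1 N,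
      ((U'eval (N - k + 1) (Real.cos (Real.pi / (N + 2))) *
        Ueval (k - 1) (Real.cos (Real.pi / (N + 2)))) : ℝ) * z ^ k

/-!
At `θ = π / (N + 2)` the identities `U_{k-1}(cos θ) sin θ = sin kθ` and
`U'_m(cos θ) sin³ θ = cos θ sin (m+1)θ - (m+1) sin θ cos (m+1)θ`, combined with the reflection
`(N + 2 - k) θ = π - kθ`, turn `P_N(-1)` into the alternating trigonometric sum
`Σ (-1)^k sin kθ (cos θ sin kθ + (N + 2 - k) sin θ cos kθ)`, which may as well run over
`0 ≤ k < N + 2` because the terms `k = 0` and `k = N + 1` vanish. With `z = e^{iθ}`, so that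
`z^(N+2) = -1`, each summand is a combination of `q^k` and `(N + 2 - k) q^k` for
`q ∈ {-1, -z², -z⁻²}`, and `q^(N+2) = (-1)^N` for all three. The closed forms of these
geometric-type sums collapse to `-(N + 2) sin² θ / (4 cos θ)`; since also
`U'_N(cos θ) = (N + 2) cos θ / sin² θ`, we get `P_N(-1) = -sec² θ / 4`.
-/

open Real Finset

theorem sum_range_add_mul_sub_mul_pow {K : Type*} [Field K] (a b : K) {q : K} (hq : q ≠ 1)
    (n : ℕ) :
    ∑ k ∈ range n, (a + b * (n - k)) * q ^ k =
      (a * (q ^ n - 1) * (q - 1) + b * (q ^ n * q - (n + 1) * q + n)) / (q - 1) ^ 2 := by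
  rw [eq_div_iff (pow_ne_zero 2 (sub_ne_zero.2 hq))]
  induction n with
  | zero => simp
  | succ n ih =>
    have hshift : ∑ k ∈ range n, (a + b * ((n + 1 : ℕ) - (k + 1 : ℕ))) * q ^ (k + 1) =
        q * ∑ k ∈ range n, (a + b * (n - k)) * q ^ k := by
      rw [mul_sum]
      refine sum_congr rfl fun k _ => ?_
      push_cast
      ring
    rw [sum_range_succ', hshift]
    push_cast
    linear_combination q * ih

theorem Complex.ofReal_cos_nat_mul_eq (θ : ℝ) (k : ℕ) :
    (Real.cos (k * θ) : ℂ) =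
      (Complex.exp (θ * Complex.I) ^ k + (Complex.exp (θ * Complex.I) ^ k)⁻¹) / 2 := by
  rw [Complex.ofReal_cos, Complex.cos, ← Complex.exp_nat_mul, ← Complex.exp_neg]
  push_cast
  ring_nf

theorem Complex.ofReal_sin_nat_mul_eq (θ : ℝ) (k : ℕ) :
    (Real.sin (k * θ) : ℂ) =
      (Complex.exp (θ * Complex.I) ^ k - (Complex.exp (θ * Complex.I) ^ k)⁻¹) /
        (2 * Complex.I) := by
  rw [Complex.ofReal_sin, Complex.sin, ← Complex.exp_nat_mul, ← Complex.exp_neg]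
  field_simp
  push_cast
  ring_nf
  simp

/-- The summand `(-1)^k U'_{n-k-1}(cos θ) U_{k-1}(cos θ) sin⁴ θ` at a node `θ = π / n`. -/
noncomputable def alternatingTrigTerm (n : ℕ) (θ : ℝ) (k : ℕ) : ℝ :=
  (-1) ^ k * sin (k * θ) * (cos θ * sin (k * θ) + (n - k) * sin θ * cos (k * θ))

-- Each coefficient has the shape `a + b * (n - k)` of `sum_range_add_mul_sub_mul_pow`,
-- hence the `0 * (n - k)`.
theorem eight_mul_ofReal_alternatingTrigTerm {θ : ℝ} {z : ℂ}
    (hz : Complex.exp (θ * Complex.I) = z) (n k : ℕ) :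
    8 * (alternatingTrigTerm n θ k : ℂ) =
      (2 * (z + z⁻¹) + 0 * (n - k)) * (-1) ^ k
        + (-(z + z⁻¹) + -(z - z⁻¹) * (n - k)) * (-z ^ 2) ^ k
        + (-(z + z⁻¹) + (z - z⁻¹) * (n - k)) * (-z⁻¹ ^ 2) ^ k := by
  have hcos := Complex.ofReal_cos_nat_mul_eq θ
  have hsin := Complex.ofReal_sin_nat_mul_eq θ
  have hcosθ : (cos θ : ℂ) = (z + z⁻¹) / 2 := by simpa [hz] using hcos 1
  have hsinθ : (sin θ : ℂ) = (z - z⁻¹) / (2 * Complex.I) := by simpa [hz] using hsin 1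
  simp only [alternatingTrigTerm, Complex.ofReal_mul, Complex.ofReal_pow, Complex.ofReal_add,
    Complex.ofReal_sub, Complex.ofReal_neg, Complex.ofReal_one, Complex.ofReal_natCast, hcos, hsin,
    hcosθ, hsinθ, hz]
  rw [show (-z ^ 2) ^ k = (-1) ^ k * (z ^ k) ^ 2 by ring,
    show (-z⁻¹ ^ 2) ^ k = (-1) ^ k * ((z ^ k)⁻¹) ^ 2 by ring]
  have hzk : z ^ k ≠ 0 := pow_ne_zero k (hz ▸ Complex.exp_ne_zero _)
  generalize z ^ k = w at hzk ⊢
  field_simp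
  ring_nf
  simp only [Complex.I_sq]
  ring

theorem four_mul_cos_mul_sum_alternatingTrigTerm {n : ℕ} {θ : ℝ} (hθ : n * θ = π)
    (hc : cos θ ≠ 0) :
    4 * cos θ * ∑ k ∈ range n, alternatingTrigTerm n θ k = -n * sin θ ^ 2 := by
  set z := Complex.exp (θ * Complex.I) with hz
  have hz₀ : z ≠ 0 := Complex.exp_ne_zero _
  have hzn : z ^ n = -1 := by
    rw [hz, ← Complex.exp_nat_mul, ← mul_assoc, ← Complex.ofReal_natCast, ← Complex.ofReal_mul,
      hθ, Complex.exp_pi_mul_I]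
  have hcosθ : (cos θ : ℂ) = (z + z⁻¹) / 2 := by simpa using Complex.ofReal_cos_nat_mul_eq θ 1
  have hsinθ : (sin θ : ℂ) = (z - z⁻¹) / (2 * Complex.I) := by
    simpa using Complex.ofReal_sin_nat_mul_eq θ 1
  have hzz : z ^ 2 ≠ -1 := by
    intro h
    apply hc
    apply Complex.ofReal_injective
    rw [hcosθ]
    field_simp
    push_cast
    linear_combination h
  have hq₀ : (-1 : ℂ) ≠ 1 := by norm_num
  have hq₁ : -z ^ 2 ≠ 1 := fun h => hzz (by linear_combination -h)
  have hq₂ : -z⁻¹ ^ 2 ≠ 1 := by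
    intro h
    apply hzz
    field_simp at h
    linear_combination -h
  have hσ₁ : (-z ^ 2) ^ n = (-1) ^ n := by
    rw [show (-z ^ 2) ^ n = (-1) ^ n * (z ^ n) ^ 2 by ring, hzn]
    ring
  have hσ₂ : (-z⁻¹ ^ 2) ^ n = (-1) ^ n := by
    rw [show (-z⁻¹ ^ 2) ^ n = (-1) ^ n * ((z ^ n) ^ 2)⁻¹ by ring, hzn]
    ring
  have hsum : 8 * ((∑ k ∈ range n, alternatingTrigTerm n θ k : ℝ) : ℂ) =
      ∑ k ∈ range n, (2 * (z + z⁻¹) + 0 * (n - k)) * (-1) ^ k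
        + ∑ k ∈ range n, (-(z + z⁻¹) + -(z - z⁻¹) * (n - k)) * (-z ^ 2) ^ k
        + ∑ k ∈ range n, (-(z + z⁻¹) + (z - z⁻¹) * (n - k)) * (-z⁻¹ ^ 2) ^ k := by
    rw [Complex.ofReal_sum, mul_sum, ← sum_add_distrib, ← sum_add_distrib]
    exact sum_congr rfl fun k _ => eight_mul_ofReal_alternatingTrigTerm hz.symm n k
  rw [sum_range_add_mul_sub_mul_pow _ _ hq₀, sum_range_add_mul_sub_mul_pow _ _ hq₁,
    sum_range_add_mul_sub_mul_pow _ _ hq₂, hσ₁, hσ₂] at hsum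
  apply Complex.ofReal_injective
  apply mul_left_cancel₀ (by norm_num : (8 : ℂ) ≠ 0)
  rw [Complex.ofReal_mul, mul_left_comm, hsum]
  simp only [Complex.ofReal_mul, Complex.ofReal_neg, Complex.ofReal_pow, Complex.ofReal_natCast,
    Complex.ofReal_ofNat, hcosθ, hsinθ]
  field_simp
  ring_nf
  simp only [Complex.I_sq]
  ring

theorem Ueval_sub_one_cos_mul_sin (θ : ℝ) (k : ℤ) :
    Ueval (k - 1) (cos θ) * sin θ = sin (k * θ) := by
  simp [Ueval]

theorem U'eval_cos_mul_sin_pow_three (θ : ℝ) (m : ℤ) :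
    U'eval m (cos θ) * sin θ ^ 3 =
      cos θ * sin ((m + 1) * θ) - (m + 1) * cos ((m + 1) * θ) * sin θ := by
  have h := congrArg (Polynomial.eval (cos θ))
    (Polynomial.Chebyshev.add_one_mul_T_eq_poly_in_U (R := ℝ) m)
  simp only [Polynomial.eval_mul, Polynomial.eval_sub, Polynomial.eval_add, Polynomial.eval_one,
    Polynomial.eval_X, Polynomial.eval_pow, Polynomial.eval_intCast,
    Polynomial.Chebyshev.T_real_cos] at h
  push_cast at h
  rw [U'eval]
  linear_combination sin θ * h + cos θ * Polynomial.Chebyshev.U_real_cos θ m +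
    sin θ * (Polynomial.derivative (Polynomial.Chebyshev.U ℝ m)).eval (cos θ) * sin_sq θ

theorem U'eval_sub_add_one_cos_mul_sin_pow_three {N : ℕ} {θ : ℝ} (hθ : (N + 2) * θ = π)
    (k : ℤ) :
    U'eval (N - k + 1) (cos θ) * sin θ ^ 3 =
      cos θ * sin (k * θ) + (N + 2 - k) * sin θ * cos (k * θ) := by
  have h := U'eval_cos_mul_sin_pow_three θ (N - k + 1)
  have hreflect : ((N - k + 1 : ℤ) + 1 : ℝ) * θ = π - k * θ := by
    push_cast
    linear_combination hθ
  rw [hreflect, sin_pi_sub, cos_pi_sub] at h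
  push_cast at h
  linear_combination h

theorem U'eval_cos_mul_sin_sq {N : ℕ} {θ : ℝ} (hθ : (N + 2) * θ = π) (hs : sin θ ≠ 0) :
    U'eval N (cos θ) * sin θ ^ 2 = (N + 2) * cos θ := by
  have h := U'eval_sub_add_one_cos_mul_sin_pow_three hθ 1
  simp only [sub_add_cancel, Int.cast_one, one_mul] at h
  apply mul_right_cancel₀ hs
  linear_combination h

theorem U'eval_mul_Ueval_mul_sin_pow_four {N : ℕ} {θ : ℝ} (hθ : (N + 2) * θ = π) (k : ℕ) :
    U'eval (N - k + 1) (cos θ) * Ueval (k - 1) (cos θ) * (-1) ^ k * sin θ ^ 4 =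
      alternatingTrigTerm (N + 2) θ k := by
  have hU' := U'eval_sub_add_one_cos_mul_sin_pow_three hθ k
  have hU := Ueval_sub_one_cos_mul_sin θ k
  rw [alternatingTrigTerm]
  push_cast at hU' hU ⊢
  linear_combination (-1) ^ k * (Ueval (k - 1) (cos θ) * sin θ * hU' +
    (cos θ * sin (k * θ) + (N + 2 - k) * sin θ * cos (k * θ)) * hU)

theorem sum_Icc_alternatingTrigTerm {N : ℕ} {θ : ℝ} (hθ : (N + 2) * θ = π) :
    ∑ k ∈ Icc 1 N, alternatingTrigTerm (N + 2) θ k =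
      ∑ k ∈ range (N + 2), alternatingTrigTerm (N + 2) θ k := by
  have hlast : alternatingTrigTerm (N + 2) θ (N + 1) = 0 := by
    have hreflect : ((N + 1 : ℕ) : ℝ) * θ = π - θ := by
      push_cast
      linear_combination hθ
    simp only [alternatingTrigTerm, hreflect, sin_pi_sub, cos_pi_sub]
    push_cast
    ring
  rw [range_eq_Ico, sum_eq_sum_Ico_succ_bot (by omega), sum_Ico_succ_top (by omega),
    Ico_add_one_right_eq_Icc, hlast]
  simp [alternatingTrigTerm]

theorem sum_Icc_U'eval_mul_Ueval_mul_neg_one_pow {N : ℕ} {θ : ℝ} (hθ : (N + 2) * θ = π)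
    (hc : cos θ ≠ 0) (hs : sin θ ≠ 0) :
    ∑ k ∈ Icc 1 N, U'eval (N - k + 1) (cos θ) * Ueval (k - 1) (cos θ) * (-1) ^ k =
      -(N + 2) / (4 * cos θ * sin θ ^ 2) := by
  have htrig := four_mul_cos_mul_sum_alternatingTrigTerm (n := N + 2) (by push_cast; exact hθ) hc
  rw [← sum_Icc_alternatingTrigTerm hθ, ← sum_congr rfl fun k _ =>
    U'eval_mul_Ueval_mul_sin_pow_four hθ k, ← sum_mul] at htrig
  rw [eq_div_iff (by positivity)]
  apply mul_right_cancel₀ (pow_ne_zero 2 hs)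
  push_cast at htrig
  linear_combination htrig

theorem stmt7 (N : ℕ) (hN : 0 < N) :
    ‖P N (-1)‖ = (1 / 4) * (1 / Real.cos (Real.pi / (N + 2))) ^ 2 := by
  set θ := π / (N + 2) with hθ_def
  have hθ : (N + 2) * θ = π := by
    rw [hθ_def]
    field_simp
  have hθ_pos : 0 < θ := by positivity
  have hθ_lt : θ < π / 2 := by
    rw [hθ_def]
    gcongr
    have : (1 : ℝ) ≤ N := by exact_mod_cast hN
    linarith
  have hc : 0 < cos θ := cos_pos_of_mem_Ioo ⟨by linarith, hθ_lt⟩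
  have hs : 0 < sin θ := sin_pos_of_pos_of_lt_pi hθ_pos (by linarith [pi_pos])
  have hU' := eq_div_of_mul_eq (by positivity) (U'eval_cos_mul_sin_sq hθ hs.ne')
  have hP : P N (-1) = -((1 / 4 * (1 / cos θ) ^ 2 : ℝ) : ℂ) := by
    have hcast : ∑ k ∈ Icc 1 N,
        ((U'eval (N - k + 1) (cos θ) * Ueval (k - 1) (cos θ) : ℝ) : ℂ) * (-1) ^ k =
        ((∑ k ∈ Icc 1 N, U'eval (N - k + 1) (cos θ) * Ueval (k - 1) (cos θ) * (-1) ^ k : ℝ) :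
          ℂ) := by
      push_cast
      rfl
    rw [P, ← hθ_def, hcast, hU', sum_Icc_U'eval_mul_Ueval_mul_neg_one_pow hθ hc.ne' hs.ne',
      ← Complex.ofReal_mul, ← Complex.ofReal_neg]
    congr 1
    field_simp
  rw [hP, norm_neg, Complex.norm_real, Real.norm_of_nonneg (by positivity)]
end

section
/- For N = 5, the polynomial P_5 satisfies |P_5(e^{it})| ≥ (1/4)·sec²(π/7) for every real t, with equality when t = π. -/
open Polynomial Complex
open scoped Real

namespace Polynomial.Chebyshev

variable (R : Type*) [CommRing R]

theorem T_three : T R 3 = 4 * X ^ 3 - 3 * X := by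
  have h := T_add_two R 1
  norm_num at h
  rw [h, T_two]; ring

theorem T_four : T R 4 = 8 * X ^ 4 - 8 * X ^ 2 + 1 := by
  have h := T_add_two R 2
  norm_num at h
  rw [h, T_three, T_two]; ring

theorem U_three : U R 3 = 8 * X ^ 3 - 4 * X := by
  have h := U_add_two R 1
  norm_num at h
  rw [h, U_two]; ring

theorem U_four : U R 4 = 16 * X ^ 4 - 12 * X ^ 2 + 1 := by
  have h := U_add_two R 2
  norm_num at h
  rw [h, U_three, U_two]; ring

theorem U_five : U R 5 = 32 * X ^ 5 - 32 * X ^ 3 + 6 * X := by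
  have h := U_add_two R 3
  norm_num at h
  rw [h, U_four, U_three]; ring

end Polynomial.Chebyshev

open Polynomial.Chebyshev

theorem norm_sum_ofReal_mul_exp_pow_sq (s : Finset ℕ) (a : ℕ → ℝ) (t : ℝ) :
    ‖∑ k ∈ s, (a k : ℂ) * exp (I * t) ^ k‖ ^ 2 =
      ∑ j ∈ s, ∑ k ∈ s, a j * a k * (T ℝ (j - k)).eval (Real.cos t) := by
  have hconj : starRingEnd ℂ (exp (I * t)) = exp (-(I * t)) := by
    rw [← exp_conj, map_mul, conj_I, conj_ofReal, neg_mul]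
  have hterm (j k : ℕ) :
      (exp (I * t) ^ j * exp (-(I * t)) ^ k).re = (T ℝ (j - k)).eval (Real.cos t) := by
    rw [T_real_cos, ← exp_nat_mul, ← exp_nat_mul, ← exp_add]
    convert exp_ofReal_mul_I_re (((j : ℤ) - k : ℤ) * t) using 3
    push_cast; ring
  rw [← normSq_eq_norm_sq, ← ofReal_re (normSq _), ← mul_conj, map_sum, Finset.sum_mul_sum,
    re_sum]
  refine Finset.sum_congr rfl fun j _ => ?_
  rw [re_sum]
  refine Finset.sum_congr rfl fun k _ => ?_
  simp only [map_mul, map_pow, conj_ofReal, hconj]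
  rw [show (a j : ℂ) * exp (I * t) ^ j * ((a k : ℂ) * exp (-(I * t)) ^ k)
      = ((a j * a k : ℝ) : ℂ) * (exp (I * t) ^ j * exp (-(I * t)) ^ k) by push_cast; ring,
    re_ofReal_mul, hterm]

theorem sum_Icc_one_five_mul_T_eval (a : ℕ → ℝ) (x : ℝ) :
    ∑ j ∈ Finset.Icc 1 5, ∑ k ∈ Finset.Icc 1 5, a j * a k * (T ℝ (j - k)).eval x =
      (a 1 ^ 2 + a 2 ^ 2 + a 3 ^ 2 + a 4 ^ 2 + a 5 ^ 2)
        + 2 * (a 1 * a 2 + a 2 * a 3 + a 3 * a 4 + a 4 * a 5) * x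
        + 2 * (a 1 * a 3 + a 2 * a 4 + a 3 * a 5) * (2 * x ^ 2 - 1)
        + 2 * (a 1 * a 4 + a 2 * a 5) * (4 * x ^ 3 - 3 * x)
        + 2 * (a 1 * a 5) * (8 * x ^ 4 - 8 * x ^ 2 + 1) := by
  norm_num [Finset.sum_Icc_succ_top, T_neg, T_two, T_three, T_four]
  ring

theorem cos_pi_div_seven_cubic :
    8 * Real.cos (π / 7) ^ 3 - 4 * Real.cos (π / 7) ^ 2 - 4 * Real.cos (π / 7) + 1 = 0 := by
  have h : Real.cos (4 * (π / 7)) = -Real.cos (3 * (π / 7)) := by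
    rw [← Real.cos_pi_sub]; ring_nf
  rw [show 4 * (π / 7) = 2 * (2 * (π / 7)) by ring, Real.cos_two_mul, Real.cos_two_mul,
    Real.cos_three_mul] at h
  have hpos : 0 < Real.cos (π / 7) + 1 := by
    linarith [Real.cos_nonneg_of_neg_pi_div_two_le_of_le (x := π / 7) (by linarith [Real.pi_pos])
      (by linarith [Real.pi_pos])]
  have hfactor : (Real.cos (π / 7) + 1) *
      (8 * Real.cos (π / 7) ^ 3 - 4 * Real.cos (π / 7) ^ 2 - 4 * Real.cos (π / 7) + 1) = 0 := by
    linear_combination h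
  exact (mul_eq_zero.mp hfactor).resolve_left hpos.ne'

theorem four_fifths_le_cos_pi_div_seven : 4 / 5 ≤ Real.cos (π / 7) := by
  have := Real.one_sub_sq_div_two_le_cos (x := π / 7)
  nlinarith [Real.pi_le_four, Real.pi_pos]

def normSqGap (c u : ℝ) : ℝ :=
  2 * (14 * c ^ 2 - 2 * c - 7) + (64 * c ^ 2 - 20 * c + 17) * u - 160 * c ^ 2 * u ^ 2
    + 4 * (32 * c ^ 2 + 8 * c - 3) * u ^ 3

section RootOfCubic

variable {c : ℝ}

theorem normSqGap_nonneg (hc : 4 / 5 ≤ c) {u : ℝ} (hu : 0 ≤ u) : 0 ≤ normSqGap c u := by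
  have h0 : 0 < 14 * c ^ 2 - 2 * c - 7 := by nlinarith
  have h3 : 0 < 32 * c ^ 2 + 8 * c - 3 := by nlinarith
  have hdisc :
      (160 * c ^ 2) ^ 2 < 16 * (64 * c ^ 2 - 20 * c + 17) * (32 * c ^ 2 + 8 * c - 3) := by
    nlinarith
  have hquad :
      0 < 64 * c ^ 2 - 20 * c + 17 - 160 * c ^ 2 * u + 4 * (32 * c ^ 2 + 8 * c - 3) * u ^ 2 := by
    nlinarith [sq_nonneg (8 * (32 * c ^ 2 + 8 * c - 3) * u - 160 * c ^ 2)]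
  unfold normSqGap
  nlinarith [mul_nonneg hu hquad.le]

theorem U'eval_five_of_cubic (hc : 8 * c ^ 3 - 4 * c ^ 2 - 4 * c + 1 = 0) :
    U'eval 5 c = 4 * c ^ 2 * (6 + 12 * c - 8 * c ^ 2) := by
  norm_num [U'eval, U_five]
  linear_combination (24 * c + 6) * hc

theorem norm_sq_sum_P_five_of_cubic (hc : 8 * c ^ 3 - 4 * c ^ 2 - 4 * c + 1 = 0) (t : ℝ) :
    ‖∑ k ∈ Finset.Icc (1 : ℕ) 5,
        ((U'eval (5 - (k : ℤ) + 1) c * Ueval ((k : ℤ) - 1) c : ℝ) : ℂ) * exp (I * t) ^ k‖ ^ 2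
      = (6 + 12 * c - 8 * c ^ 2) ^ 2
        + 16 * (1 + Real.cos t) * normSqGap c (1 + Real.cos t) := by
  have h1 : U'eval 5 c * Ueval 0 c = 24 * c ^ 2 + 20 * c - 4 := by
    norm_num [U'eval, Ueval, U_five]; linear_combination (10 + 20 * c) * hc
  have h2 : U'eval 4 c * Ueval 1 c = 48 * c ^ 2 + 16 * c - 8 := by
    norm_num [U'eval, Ueval, U_four]; linear_combination (8 + 16 * c) * hc
  have h3 : U'eval 3 c * Ueval 2 c = 32 * c ^ 2 + 12 * c - 2 := by
    norm_num [U'eval, Ueval, U_three, U_two]; linear_combination (6 + 12 * c) * hc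
  have h4 : U'eval 2 c * Ueval 3 c = 16 * c ^ 2 + 8 * c - 4 := by
    norm_num [U'eval, Ueval, U_three, U_two]; linear_combination (4 + 8 * c) * hc
  have h5 : U'eval 1 c * Ueval 4 c = 4 * c := by
    norm_num [U'eval, Ueval, U_four]; linear_combination (2 + 4 * c) * hc
  rw [norm_sum_ofReal_mul_exp_pow_sq _
      (fun k => U'eval (5 - (k : ℤ) + 1) c * Ueval ((k : ℤ) - 1) c), sum_Icc_one_five_mul_T_eval]
  norm_num only [h1, h2, h3, h4, h5]
  unfold normSqGap
  set x := Real.cos t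
  linear_combination (128 + 464 * x + 1040 * x ^ 2 + 896 * x ^ 3 + 192 * x ^ 4 + 128 * c
    + 512 * c * x + 768 * c * x ^ 2 + 384 * c * x ^ 3) * hc

end RootOfCubic

theorem U'eval_five_cos_pi_div_seven_pos : 0 < U'eval 5 (Real.cos (π / 7)) := by
  have hc := four_fifths_le_cos_pi_div_seven
  rw [U'eval_five_of_cubic cos_pi_div_seven_cubic]
  exact mul_pos (by positivity) (by nlinarith [Real.cos_le_one (π / 7)])

theorem norm_P_five_exp (t : ℝ) :
    ‖P 5 (exp (I * t))‖ = √((6 + 12 * Real.cos (π / 7) - 8 * Real.cos (π / 7) ^ 2) ^ 2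
      + 16 * (1 + Real.cos t) * normSqGap (Real.cos (π / 7)) (1 + Real.cos t))
        / U'eval 5 (Real.cos (π / 7)) := by
  simp only [P, Nat.cast_ofNat, show π / (5 + 2) = π / 7 by norm_num]
  rw [norm_mul, norm_real,
    Real.norm_of_nonneg (one_div_pos.mpr U'eval_five_cos_pi_div_seven_pos).le,
    ← Real.sqrt_sq (norm_nonneg (∑ k ∈ _, _)), norm_sq_sum_P_five_of_cubic cos_pi_div_seven_cubic]
  ring

theorem stmt14 :
    (∀ t : ℝ, (1 / 4) * (1 / Real.cos (Real.pi / 7)) ^ 2 ≤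
        ‖P 5 (Complex.exp (Complex.I * t))‖) ∧
      ‖P 5 (Complex.exp (Complex.I * Real.pi))‖ =
        (1 / 4) * (1 / Real.cos (Real.pi / 7)) ^ 2 := by
  set c := Real.cos (π / 7)
  have hc45 : 4 / 5 ≤ c := four_fifths_le_cos_pi_div_seven
  have hm : 0 < 6 + 12 * c - 8 * c ^ 2 := by nlinarith [Real.cos_le_one (π / 7)]
  have hmin : √((6 + 12 * c - 8 * c ^ 2) ^ 2) / U'eval 5 c = 1 / 4 * (1 / c) ^ 2 := by
    rw [U'eval_five_of_cubic cos_pi_div_seven_cubic, Real.sqrt_sq hm.le,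
      div_mul_cancel_right₀ hm.ne']
    ring
  refine ⟨fun t => ?_, ?_⟩
  · have hu : 0 ≤ 1 + Real.cos t := by linarith [Real.neg_one_le_cos t]
    rw [norm_P_five_exp, ← hmin]
    gcongr
    · exact U'eval_five_cos_pi_div_seven_pos.le
    · exact le_add_of_nonneg_right (mul_nonneg (by positivity) (normSqGap_nonneg hc45 hu))
  · rw [norm_P_five_exp, Real.cos_pi, add_neg_cancel, mul_zero, zero_mul, add_zero, hmin]
end

section
/- For every positive integer n, the Suffridge polynomial S_{n,1} satisfies |S_{n,1}(−1)| = (1/4)·((n+1)/n)·sec²(π/(2(n+1))). -/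
/-!
Put `θ = π / (n + 1)`. Since `sin (k (θ + π)) = (-1)^k sin (k θ)`, the value `S_{n,1}(-1)` is
`(n sin θ)⁻¹ Σ_{k=1}^n (n + 1 - k) sin (k α)` with `α = θ + π`. This is a Fejér-type sum, whose
closed form `((n + 1) sin α - sin ((n + 1) α)) / (4 sin² (α / 2))` follows by induction from
Lagrange's formula for `Σ sin (k α)`. At `α = θ + π` the term `sin ((n + 1) α)` vanishes,
`sin α = -sin θ` and `sin (α / 2) = cos (θ / 2)`, leaving `-(n + 1) / (4 n cos² (θ / 2))`.
-/

/-- The Suffridge polynomial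
`S_{n,j}(z) = Σ_{k=1}^n (1 − (k−1)/n) · (sin(πjk/(n+1))/sin(πj/(n+1))) · z^k`. -/
noncomputable def S (n j : ℕ) (z : ℂ) : ℂ :=
  ∑ k ∈ Finset.Icc 1 n,
    ((1 - ((k : ℝ) - 1) / n) *
      (Real.sin (Real.pi * j * k / (n + 1)) / Real.sin (Real.pi * j / (n + 1))) : ℝ) * z ^ k

open Real Finset

theorem sum_Icc_sin_nat_mul_mul_two_sin_half (α : ℝ) (N : ℕ) :
    (∑ k ∈ Icc 1 N, sin (k * α)) * (2 * sin (α / 2)) = cos (α / 2) - cos ((N + 1 / 2) * α) := by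
  induction N with
  | zero => simp; ring_nf
  | succ N ih =>
    rw [sum_Icc_succ_top (by omega), add_mul, ih]
    have h := cos_sub_cos ((N + 1 / 2) * α) ((N + 1 + 1 / 2) * α)
    rw [show ((N + 1 / 2) * α + (N + 1 + 1 / 2) * α) / 2 = (N + 1) * α by ring,
      show ((N + 1 / 2) * α - (N + 1 + 1 / 2) * α) / 2 = -(α / 2) by ring, sin_neg] at h
    push_cast
    linear_combination -h

theorem sum_Icc_sub_mul_sin_nat_mul_mul_four_sin_sq_half (α : ℝ) (N : ℕ) :
    (∑ k ∈ Icc 1 N, ((N : ℝ) + 1 - k) * sin (k * α)) * (4 * sin (α / 2) ^ 2) =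
      (N + 1) * sin α - sin ((N + 1) * α) := by
  induction N with
  | zero => simp
  | succ N ih =>
    have hsplit : ∑ k ∈ Icc 1 (N + 1), ((N + 1 : ℕ) + 1 - (k : ℝ)) * sin (k * α) =
        ∑ k ∈ Icc 1 N, ((N : ℝ) + 1 - k) * sin (k * α) + ∑ k ∈ Icc 1 (N + 1), sin (k * α) := by
      rw [sum_Icc_succ_top (by omega), sum_Icc_succ_top (show 1 ≤ N + 1 by omega), ← add_assoc,
        ← sum_add_distrib]
      push_cast
      congr 1
      · exact sum_congr rfl fun k _ => by ring
      · ring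
    have hlagrange := sum_Icc_sin_nat_mul_mul_two_sin_half α (N + 1)
    have hdouble : sin α = 2 * sin (α / 2) * cos (α / 2) := by
      rw [← sin_two_mul, mul_div_cancel₀ α two_ne_zero]
    have hdiff := sin_sub_sin ((N + 2) * α) ((N + 1) * α)
    rw [show ((N + 2) * α - (N + 1) * α) / 2 = α / 2 by ring,
      show ((N + 2) * α + (N + 1) * α) / 2 = (N + 1 + 1 / 2) * α by ring] at hdiff
    rw [hsplit, show ((N + 1 : ℕ) + 1) * α = (N + 2) * α by push_cast; ring]
    push_cast at hlagrange ⊢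
    linear_combination ih + 2 * sin (α / 2) * hlagrange - hdouble + hdiff

theorem S_ofReal (n j : ℕ) (x : ℝ) :
    S n j x = ↑(∑ k ∈ Icc 1 n,
      (1 - ((k : ℝ) - 1) / n) * (sin (π * j * k / (n + 1)) / sin (π * j / (n + 1))) * x ^ k) := by
  simp only [S, Complex.ofReal_sum, Complex.ofReal_mul, Complex.ofReal_pow]

theorem S_one_neg_one (n : ℕ) (hn : 0 < n) :
    S n 1 (-1) =
      ((-((1 / 4) * (((n : ℝ) + 1) / n) * (1 / cos (π / (2 * (n + 1)))) ^ 2) : ℝ) : ℂ) := by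
  set θ := π / (n + 1) with hθ
  have hθpos : 0 < θ := by positivity
  have hθlt : θ < π := div_lt_self pi_pos (by norm_cast; omega)
  have hsinθ : sin θ ≠ 0 := (sin_pos_of_pos_of_lt_pi hθpos hθlt).ne'
  have hcos : cos (θ / 2) ≠ 0 :=
    (cos_pos_of_mem_Ioo ⟨by linarith [pi_pos], by linarith⟩).ne'
  have hfejer := sum_Icc_sub_mul_sin_nat_mul_mul_four_sin_sq_half (θ + π) n
  rw [show (θ + π) / 2 = θ / 2 + π / 2 by ring, sin_add_pi_div_two, sin_add_pi,
    show ((n : ℝ) + 1) * (θ + π) = (n + 2 : ℕ) * π by rw [hθ]; field_simp; push_cast; ring,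
    sin_nat_mul_pi] at hfejer
  have hterm (k : ℕ) :
      (1 - ((k : ℝ) - 1) / n) * (sin (π * (1 : ℕ) * k / (n + 1)) / sin (π * (1 : ℕ) / (n + 1))) *
        (-1) ^ k = ((n : ℝ) + 1 - k) * sin (k * (θ + π)) / (n * sin θ) := by
    rw [mul_add, sin_add_nat_mul_pi, hθ, Nat.cast_one]
    field_simp
    ring
  rw [show (-1 : ℂ) = ((-1 : ℝ) : ℂ) by simp, S_ofReal, Complex.ofReal_inj,
    sum_congr rfl fun k _ => hterm k, ← sum_div,
    show π / (2 * (n + 1)) = θ / 2 by rw [hθ, div_div, mul_comm]]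
  field_simp
  linear_combination hfejer

theorem stmt19 (n : ℕ) (hn : 0 < n) :
    ‖S n 1 (-1)‖ =
      (1 / 4) * (((n : ℝ) + 1) / n) * (1 / Real.cos (Real.pi / (2 * (n + 1)))) ^ 2 := by
  rw [S_one_neg_one n hn, Complex.norm_real, norm_neg, norm_of_nonneg (by positivity)]
end
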